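/- arXiv:0901.0805 — 2 statements merged into one kernel-verified Lean document; each statement's English description precedes it below -/
import Mathlib

section
/- Let $G$ be a finite group, $p$ a prime, and $H$ a strongly $p$-embedded subgroup of $G$ with $O_{p'}(G) = 1$. Then $F(G) = 1$ and $F^*(G) = E(G)$ is a non-abelian simple group. -/
def conjSub {G : Type*} [Group G] (g : G) (H : Subgroup G) : Subgroup G :=
  Subgroup.map (MulAut.conj g).toMonoidHom H

def IsStronglyPEmbedded {G : Type*} [Group G] (p : ℕ) (H : Subgroup G) : Prop :=
  H ≠ ⊤ ∧ (p ∣ Nat.card H) ∧ ∀ g : G, g ∉ H → ¬ (p ∣ Nat.card ↥(H ⊓ conjSub g H))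

def pPrimeCore (p : ℕ) (G : Type*) [Group G] : Subgroup G :=
  sSup {N : Subgroup G | N.Normal ∧ ¬ (p ∣ Nat.card N)}


/-- The Fitting subgroup: the largest normal nilpotent subgroup. -/
def fittingSubgroup (G : Type*) [Group G] : Subgroup G :=
  sSup {N : Subgroup G | N.Normal ∧ Group.IsNilpotent N}

/-- A subnormal subgroup: there is a chain `K ⊴ ⋯ ⊴ G`. -/
def IsSubnormal {G : Type*} [Group G] (K : Subgroup G) : Prop :=
  Relation.ReflTransGen
    (fun A B : Subgroup G => A ≤ B ∧ ∀ b ∈ B, ∀ a ∈ A, b * a * b⁻¹ ∈ A) K ⊤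

/-- A quasisimple subgroup: perfect and simple modulo its centre. -/
def IsQuasisimple {G : Type*} [Group G] (L : Subgroup G) : Prop :=
  commutator ↥L = ⊤ ∧ IsSimpleGroup (↥L ⧸ Subgroup.center ↥L)

/-- A component of `G`: a subnormal quasisimple subgroup. -/
def IsComponent {G : Type*} [Group G] (L : Subgroup G) : Prop :=
  IsSubnormal L ∧ IsQuasisimple L

/-- `E(G)`, the layer of `G`: the subgroup generated by the components. -/
def layerSub (G : Type*) [Group G] : Subgroup G :=
  sSup {L : Subgroup G | IsComponent L}

/-- `F^*(G) = F(G) E(G)`, the generalized Fitting subgroup. -/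
def genFitting (G : Type*) [Group G] : Subgroup G :=
  fittingSubgroup G ⊔ layerSub G

/-!
Since `O_{p'}(G) = 1`, every nontrivial normal subgroup of `G` has order divisible by `p`.
Strong `p`-embedding gives `C_G(x) ≤ H` for every `x ∈ H` of order `p`, and `H` contains a Sylow
`p`-subgroup, so every element of order `p` lies in a conjugate of `H`. Hence no element of order
`p` centralizes a normal subgroup of order divisible by `p`: that subgroup would lie in a conjugate
of `H`, whose intersection with another conjugate would then have order divisible by `p`.

Let `M` be a minimal normal subgroup of `G`. By the above `C_G(M) = 1`, so `M` is nonabelian and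
lies in every nontrivial normal subgroup. If `K` is a minimal normal subgroup of `M`, its
`G`-conjugates pairwise commute and generate `M`; the same centralizer argument puts all of them in
one conjugate of `H` unless `K = M`. So `M` is simple, it lies in every nontrivial subnormal
subgroup, hence is the only component, and `F(G) = 1` since `M` is not nilpotent.
-/

open scoped Pointwise

open Subgroup hiding IsSubnormal

theorem conjSub_eq_smul {G : Type*} [Group G] (g : G) (K : Subgroup G) :
    conjSub g K = MulAut.conj g • K :=
  rfl

theorem dvd_card_of_pPrimeCore_eq_bot {G : Type*} [Group G] {p : ℕ} (h : pPrimeCore p G = ⊥)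
    {N : Subgroup G} (hN : N.Normal) (hN0 : N ≠ ⊥) : p ∣ Nat.card N := by
  by_contra hpN
  exact hN0 (le_bot_iff.mp (h ▸ le_sSup ⟨hN, hpN⟩))

theorem isSimpleGroup_quotient_center_iff {L : Type*} [Group L] (h : center L = ⊥) :
    IsSimpleGroup (L ⧸ center L) ↔ IsSimpleGroup L :=
  ((QuotientGroup.quotientMulEquivOfEq h).trans QuotientGroup.quotientBot).isSimpleGroup_congr

theorem not_isMulCommutative_of_center_eq_bot {L : Type*} [Group L] [Nontrivial L]
    (h : center L = ⊥) : ¬ IsMulCommutative L := by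
  rw [← commutator_eq_bot_iff, commutator_eq_bot_iff_center_eq_top, h]
  exact bot_ne_top

theorem Sylow.exists_mem_of_orderOf_eq {G : Type*} [Group G] {p : ℕ} {x : G}
    (hx : orderOf x = p) : ∃ Q : Sylow p G, x ∈ Q := by
  obtain ⟨Q, hxQ⟩ := (IsPGroup.of_card (n := 1) (G := zpowers x)
    (by rw [Nat.card_zpowers, hx, pow_one])).exists_le_sylow
  exact ⟨Q, hxQ (mem_zpowers x)⟩

namespace Subgroup

variable {G : Type*} [Group G]

theorem card_pointwise_smul {α : Type*} [Group α] [MulDistribMulAction α G] (a : α)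
    (K : Subgroup G) : Nat.card ↥(a • K) = Nat.card K :=
  (Nat.card_congr (equivSMul a K).toEquiv).symm

theorem exists_mem_orderOf_eq [Finite G] {p : ℕ} [Fact p.Prime] {K : Subgroup G}
    (hK : p ∣ Nat.card K) : ∃ x ∈ K, orderOf x = p := by
  obtain ⟨x, hx⟩ := exists_prime_orderOf_dvd_card' p hK
  exact ⟨x, x.2, (orderOf_coe x).trans hx⟩

theorem mem_normalizer_iff_conj_smul_eq {g : G} {A : Subgroup G} :
    g ∈ normalizer (A : Set G) ↔ MulAut.conj g • A = A :=
  mem_normalizer_iff_map_conj_eq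

theorem conj_smul_conj_smul (g x : G) (K : Subgroup G) :
    MulAut.conj x • MulAut.conj g • K =
      MulAut.conj g • MulAut.conj (g⁻¹ * x * g) • K := by
  rw [smul_smul, smul_smul, ← map_mul, ← map_mul]
  congr 2
  group

theorem normal_iSup_conj_smul (K : Subgroup G) : (⨆ g : G, MulAut.conj g • K).Normal := by
  refine ⟨fun n hn g => ?_⟩
  have hle :
      MulAut.conj g • (⨆ h : G, MulAut.conj h • K) ≤ ⨆ h : G, MulAut.conj h • K := by
    rw [← conjSub_eq_smul, conjSub, map_iSup]
    refine iSup_le fun h => ?_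
    rw [← conjSub, conjSub_eq_smul, smul_smul, ← map_mul]
    exact le_iSup (fun h => MulAut.conj h • K) (g * h)
  exact hle (smul_mem_pointwise_smul n (MulAut.conj g) _ hn)

theorem le_centralizer_of_disjoint {A B : Subgroup G} (hA : A ≤ normalizer (B : Set G))
    (hB : B ≤ normalizer (A : Set G)) (hAB : Disjoint A B) : A ≤ centralizer (B : Set G) := by
  intro a ha b hb
  have hA' : a * b * a⁻¹ * b⁻¹ ∈ A := by
    simpa only [mul_assoc] using
      A.mul_mem ha ((mem_normalizer_iff.mp (hB hb) a⁻¹).mp (A.inv_mem ha))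
  have hB' : a * b * a⁻¹ * b⁻¹ ∈ B :=
    B.mul_mem ((mem_normalizer_iff.mp (hA ha) b).mp hb) (B.inv_mem hb)
  have hcomm : a * b * a⁻¹ * b⁻¹ = 1 := hAB.le_bot ⟨hA', hB'⟩
  rw [mul_inv_eq_one, mul_inv_eq_iff_eq_mul] at hcomm
  exact hcomm.symm

theorem center_eq_bot_of_le_of_centralizer_eq_bot {M L : Subgroup G} (hML : M ≤ L)
    (hC : centralizer (M : Set G) = ⊥) : center L = ⊥ := by
  refine eq_bot_iff.mpr fun z hz => Subtype.ext ?_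
  have hzC : (z : G) ∈ centralizer (M : Set G) := fun m hm =>
    congrArg Subtype.val (mem_center_iff.mp hz ⟨m, hML hm⟩)
  rwa [hC] at hzC

end Subgroup

namespace IsStronglyPEmbedded

variable {G : Type*} [Group G] {p : ℕ} {H : Subgroup G}

theorem conj_smul (hH : IsStronglyPEmbedded p H) (g : G) :
    IsStronglyPEmbedded p (MulAut.conj g • H) := by
  obtain ⟨hHtop, hHp, hHint⟩ := hH
  refine ⟨fun htop => hHtop ?_, by rwa [card_pointwise_smul], fun x hx => ?_⟩
  · rw [eq_top_iff, ← pointwise_smul_le_pointwise_smul_iff (a := MulAut.conj g), htop]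
    exact le_top
  have hy : g⁻¹ * x * g ∉ H := fun hy => hx (by
    simpa [mul_assoc] using smul_mem_pointwise_smul _ (MulAut.conj g) H hy)
  rw [conjSub_eq_smul, conj_smul_conj_smul, ← smul_inf, card_pointwise_smul]
  exact hHint _ hy

theorem normalizer_le (hH : IsStronglyPEmbedded p H) {P : Subgroup G} (hPH : P ≤ H)
    (hP : p ∣ Nat.card P) : normalizer (P : Set G) ≤ H := by
  intro g hg
  by_contra hgH
  refine hH.2.2 g hgH (hP.trans (card_dvd_of_le (le_inf hPH ?_)))
  rw [conjSub_eq_smul, ← mem_normalizer_iff_conj_smul_eq.mp hg]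
  exact pointwise_smul_le_pointwise_smul_iff.mpr hPH

theorem not_dvd_card_of_le (hH : IsStronglyPEmbedded p H) {N : Subgroup G} [N.Normal]
    (hNH : N ≤ H) : ¬ p ∣ Nat.card N := fun hN =>
  hH.1 (top_le_iff.mp ((normalizer_eq_top N).symm.le.trans (hH.normalizer_le hNH hN)))

theorem centralizer_le (hH : IsStronglyPEmbedded p H) {x : G} (hxH : x ∈ H)
    (hx : orderOf x = p) : centralizer {x} ≤ H :=
  calc centralizer {x}
      = centralizer (zpowers x : Set G) := by rw [zpowers_eq_closure, centralizer_closure]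
    _ ≤ normalizer (zpowers x : Set G) := centralizer_le_normalizer _
    _ ≤ H := hH.normalizer_le (zpowers_le.mpr hxH) (by rw [Nat.card_zpowers, hx])

theorem le_of_le_centralizer (hH : IsStronglyPEmbedded p H) {x : G} (hxH : x ∈ H)
    (hx : orderOf x = p) {A B : Subgroup G} (hxA : x ∈ A) (hBA : B ≤ centralizer (A : Set G)) :
    B ≤ H :=
  hBA.trans ((Subgroup.centralizer_le (Set.singleton_subset_iff.mpr hxA)).trans
    (hH.centralizer_le hxH hx))

variable [Finite G] [Fact p.Prime]

/-- For `x ∈ H` of order `p` and a Sylow subgroup `Q ∋ x`, an element `z` of order `p` in `Z(Q)`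
centralizes `x`, so `z ∈ H` and then `Q ≤ C_G(z) ≤ H`. -/
theorem exists_sylow_le (hH : IsStronglyPEmbedded p H) :
    ∃ Q : Sylow p G, (Q : Subgroup G) ≤ H := by
  obtain ⟨x, hxH, hx⟩ := exists_mem_orderOf_eq hH.2.1
  obtain ⟨Q, hxQ⟩ := Sylow.exists_mem_of_orderOf_eq hx
  have : Nontrivial Q :=
    ⟨⟨⟨x, hxQ⟩, 1, fun h => (orderOf_eq_prime_iff.mp hx).2 (congrArg Subtype.val h)⟩⟩
  have hZ : p ∣ Nat.card (center Q) :=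
    (Q.2.to_subgroup _).card_eq_or_dvd.resolve_left
      (Finite.one_lt_card_iff_nontrivial.mpr Q.2.center_nontrivial).ne'
  obtain ⟨z, hz, hzp⟩ := exists_mem_orderOf_eq hZ
  have hzQ : ∀ q ∈ Q, q ∈ centralizer {(z : G)} := fun q hq =>
    mem_centralizer_singleton_iff.mpr (congrArg Subtype.val (mem_center_iff.mp hz ⟨q, hq⟩))
  have hzH : (z : G) ∈ H := hH.centralizer_le hxH hx <|
    mem_centralizer_singleton_iff.mpr (mem_centralizer_singleton_iff.mp (hzQ x hxQ)).symm
  exact ⟨Q, fun q hq => hH.centralizer_le hzH ((orderOf_coe z).trans hzp) (hzQ q hq)⟩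

theorem exists_mem_conj_smul (hH : IsStronglyPEmbedded p H) {x : G} (hx : orderOf x = p) :
    ∃ g : G, x ∈ MulAut.conj g • H := by
  obtain ⟨Q, hQH⟩ := hH.exists_sylow_le
  obtain ⟨R, hxR⟩ := Sylow.exists_mem_of_orderOf_eq hx
  obtain ⟨g, rfl⟩ := MulAction.exists_smul_eq G Q R
  exact ⟨g, pointwise_smul_le_pointwise_smul_iff.mpr hQH hxR⟩

theorem not_le_centralizer (hH : IsStronglyPEmbedded p H) {x : G} (hx : orderOf x = p)
    {N : Subgroup G} [N.Normal] (hN : p ∣ Nat.card N) : ¬ N ≤ centralizer {x} := by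
  obtain ⟨g, hxg⟩ := hH.exists_mem_conj_smul hx
  exact fun hNx => (hH.conj_smul g).not_dvd_card_of_le
    (hNx.trans ((hH.conj_smul g).centralizer_le hxg hx)) hN

theorem centralizer_eq_bot (hH : IsStronglyPEmbedded p H) {M : Subgroup G} [M.Normal]
    (hM : p ∣ Nat.card M)
    (hdvd : ∀ N : Subgroup G, N.Normal → N ≠ ⊥ → p ∣ Nat.card N) :
    centralizer (M : Set G) = ⊥ := by
  by_contra hC
  obtain ⟨x, hxC, hx⟩ := exists_mem_orderOf_eq (hdvd _ inferInstance hC)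
  exact hH.not_le_centralizer hx hM fun m hm =>
    mem_centralizer_singleton_iff.mpr (mem_centralizer_iff.mp hxC m hm)

end IsStronglyPEmbedded

def IsNontrivialNormalIn {G : Type*} [Group G] (M A : Subgroup G) : Prop :=
  A ≠ ⊥ ∧ A ≤ M ∧ M ≤ normalizer (A : Set G)

section NontrivialNormalIn

variable {G : Type*} [Group G] {M A B K : Subgroup G}

theorem IsNontrivialNormalIn.conj_smul [M.Normal] (hA : IsNontrivialNormalIn M A) (g : G) :
    IsNontrivialNormalIn M (MulAut.conj g • A) := by
  obtain ⟨hA0, hAM, hMA⟩ := hA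
  refine ⟨fun h => hA0 ?_, ?_, fun m hm => ?_⟩
  · rw [← inv_smul_smul (MulAut.conj g) A, h, smul_bot]
  · exact (pointwise_smul_le_pointwise_smul_iff.mpr hAM).trans_eq (Normal.conj_smul_eq_self g M)
  · have hm' : g⁻¹ * m * g ∈ M := by simpa using Normal.conj_mem ‹_› m hm g⁻¹
    rw [mem_normalizer_iff_conj_smul_eq, conj_smul_conj_smul,
      mem_normalizer_iff_conj_smul_eq.mp (hMA hm')]

theorem Minimal.conj_smul_of_isNontrivialNormalIn [M.Normal]
    (hK : Minimal (IsNontrivialNormalIn M) K) (g : G) :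
    Minimal (IsNontrivialNormalIn M) (MulAut.conj g • K) := by
  refine ⟨hK.1.conj_smul g, fun B hB hBK => ?_⟩
  rw [subset_pointwise_smul_iff, ← map_inv] at hBK
  rw [pointwise_smul_subset_iff, ← map_inv]
  exact hK.le_of_le (hB.conj_smul g⁻¹) hBK

theorem disjoint_of_minimal_isNontrivialNormalIn (hA : Minimal (IsNontrivialNormalIn M) A)
    (hB : Minimal (IsNontrivialNormalIn M) B) (hAB : A ≠ B) : Disjoint A B := by
  rw [disjoint_iff]
  by_contra h
  have hAB' : IsNontrivialNormalIn M (A ⊓ B) := ⟨h, inf_le_left.trans hA.1.2.1,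
    (le_inf hA.1.2.2 hB.1.2.2).trans inf_normalizer_le_normalizer_inf⟩
  exact hAB (le_antisymm ((hA.le_of_le hAB' inf_le_left).trans inf_le_right)
    ((hB.le_of_le hAB' inf_le_right).trans inf_le_left))

theorem le_centralizer_of_minimal_isNontrivialNormalIn (hA : Minimal (IsNontrivialNormalIn M) A)
    (hB : Minimal (IsNontrivialNormalIn M) B) (hAB : A ≠ B) : A ≤ centralizer (B : Set G) :=
  le_centralizer_of_disjoint (hA.1.2.1.trans hB.1.2.2) (hB.1.2.1.trans hA.1.2.2)
    (disjoint_of_minimal_isNontrivialNormalIn hA hB hAB)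

theorem iSup_conj_smul_eq (hM : Minimal (fun N : Subgroup G => N.Normal ∧ N ≠ ⊥) M)
    (hK : IsNontrivialNormalIn M K) : ⨆ g : G, MulAut.conj g • K = M := by
  have := hM.1.1
  have hJM : ⨆ g : G, MulAut.conj g • K ≤ M := iSup_le fun g => (hK.conj_smul g).2.1
  have hKJ : K ≤ ⨆ g : G, MulAut.conj g • K := le_iSup_of_le 1 (by rw [map_one, one_smul])
  exact le_antisymm hJM
    (hM.le_of_le ⟨normal_iSup_conj_smul K, fun h => hK.1 (le_bot_iff.mp (h ▸ hKJ))⟩ hJM)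

/-- The distinct conjugates of `K` commute elementwise, so `M`, which they generate, is the image
of their direct product. -/
theorem dvd_card_of_minimal_isNontrivialNormalIn [Finite G] {p : ℕ} (hp : p.Prime)
    (hM : Minimal (fun N : Subgroup G => N.Normal ∧ N ≠ ⊥) M)
    (hK : Minimal (IsNontrivialNormalIn M) K) (hpM : p ∣ Nat.card M) : p ∣ Nat.card K := by
  have := hM.1.1
  let ι := Set.range fun g : G => MulAut.conj g • K
  have : Fintype ι := Fintype.ofFinite ι
  have hcomm : Pairwise fun A B : ι =>
      ∀ x y : G, x ∈ (A : Subgroup G) → y ∈ (B : Subgroup G) → Commute x y := by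
    rintro ⟨_, g, rfl⟩ ⟨_, h, rfl⟩ hne x y hx hy
    exact (le_centralizer_of_minimal_isNontrivialNormalIn (hK.conj_smul_of_isNontrivialNormalIn g)
      (hK.conj_smul_of_isNontrivialNormalIn h) (fun e => hne (Subtype.ext e)) hx y hy).symm
  have hrange : (noncommPiCoprod hcomm).range = M := by
    rw [noncommPiCoprod_range, ← sSup_eq_iSup', sSup_range, iSup_conj_smul_eq hM hK.1]
  have hdvd : p ∣ ∏ A : ι, Nat.card (A : Subgroup G) := by
    have h := card_range_dvd (noncommPiCoprod hcomm)
    rw [hrange, Nat.card_pi] at h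
    exact hpM.trans h
  obtain ⟨⟨_, g, rfl⟩, -, hA⟩ := (Prime.dvd_finsetProd_iff hp.prime _).mp hdvd
  rwa [card_pointwise_smul] at hA

end NontrivialNormalIn

namespace IsStronglyPEmbedded

variable {G : Type*} [Group G] [Finite G] {p : ℕ} [Fact p.Prime] {H M K : Subgroup G}

/-- Take `x ∈ K` of order `p` in a conjugate `H'` of `H`. The conjugates of `K` other than `K`
centralize `x`, so lie in `H'`; one of them has an element of order `p`, which centralizes `K`,
so `K ≤ H'` as well, and then `M ≤ H'`. -/
theorem eq_of_minimal_isNontrivialNormalIn (hH : IsStronglyPEmbedded p H)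
    (hM : Minimal (fun N : Subgroup G => N.Normal ∧ N ≠ ⊥) M) (hpM : p ∣ Nat.card M)
    (hK : Minimal (IsNontrivialNormalIn M) K) : K = M := by
  have := hM.1.1
  by_contra hKM
  have hpK := dvd_card_of_minimal_isNontrivialNormalIn Fact.out hM hK hpM
  obtain ⟨x, hxK, hx⟩ := exists_mem_orderOf_eq hpK
  obtain ⟨g, hxH⟩ := hH.exists_mem_conj_smul hx
  have hH' := hH.conj_smul g
  have hconj_le :
      ∀ h : G, MulAut.conj h • K ≠ K → MulAut.conj h • K ≤ MulAut.conj g • H :=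
    fun h hne => hH'.le_of_le_centralizer hxH hx hxK
      (le_centralizer_of_minimal_isNontrivialNormalIn (hK.conj_smul_of_isNontrivialNormalIn h) hK
        hne)
  obtain ⟨h, hne⟩ : ∃ h : G, MulAut.conj h • K ≠ K := by
    by_contra! hall
    exact hKM (by rw [← iSup_conj_smul_eq hM hK.1]; simp [hall])
  obtain ⟨y, hyK, hy⟩ := exists_mem_orderOf_eq (p := p) (K := MulAut.conj h • K)
    (by rwa [card_pointwise_smul])
  have hKH : K ≤ MulAut.conj g • H := hH'.le_of_le_centralizer (hconj_le h hne hyK) hy hyK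
    (le_centralizer_of_minimal_isNontrivialNormalIn hK (hK.conj_smul_of_isNontrivialNormalIn h)
      (Ne.symm hne))
  refine hH'.not_dvd_card_of_le (N := M) ?_ hpM
  rw [← iSup_conj_smul_eq hM hK.1]
  refine iSup_le fun h => ?_
  by_cases hh : MulAut.conj h • K = K
  · rw [hh]
    exact hKH
  · exact hconj_le h hh

theorem isSimpleGroup_of_minimal (hH : IsStronglyPEmbedded p H)
    (hM : Minimal (fun N : Subgroup G => N.Normal ∧ N ≠ ⊥) M) (hpM : p ∣ Nat.card M) :
    IsSimpleGroup M := by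
  have : Nontrivial M := (nontrivial_iff_ne_bot M).mpr hM.1.2
  refine ⟨fun N hN => or_iff_not_imp_left.mpr fun hN0 => ?_⟩
  have hA : IsNontrivialNormalIn M (N.map M.subtype) :=
    ⟨(map_eq_bot_iff_of_injective N M.subtype_injective).not.mpr hN0, map_subtype_le N,
      (normal_subgroupOf_iff_le_normalizer (map_subtype_le N)).mp
        (by rwa [subgroupOf, comap_map_eq_self_of_injective M.subtype_injective])⟩
  obtain ⟨K, hKA, hK⟩ := exists_minimal_le_of_wellFoundedLT _ _ hA
  have hMA : M ≤ N.map M.subtype := hH.eq_of_minimal_isNontrivialNormalIn hM hpM hK ▸ hKA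
  refine eq_top_iff.mpr fun x _ => ?_
  obtain ⟨y, hy, hyx⟩ := hMA x.2
  rwa [← Subtype.ext hyx]

end IsStronglyPEmbedded

section TrivialCentralizer

variable {G : Type*} [Group G] {M : Subgroup G}

theorem le_of_normal_of_centralizer_eq_bot
    (hM : Minimal (fun N : Subgroup G => N.Normal ∧ N ≠ ⊥) M)
    (hC : centralizer (M : Set G) = ⊥) {N : Subgroup G} [N.Normal] (hN0 : N ≠ ⊥) :
    M ≤ N := by
  have := hM.1.1
  refine (hM.le_of_le ⟨inferInstance, fun hNM => hN0 ?_⟩ inf_le_right).trans inf_le_left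
  rw [← le_bot_iff, ← hC]
  exact le_centralizer_of_disjoint le_normalizer_of_normal le_normalizer_of_normal
    (disjoint_iff.mpr hNM)

theorem fittingSubgroup_eq_bot_of_centralizer_eq_bot [IsSimpleGroup M]
    (hM : Minimal (fun N : Subgroup G => N.Normal ∧ N ≠ ⊥) M)
    (hC : centralizer (M : Set G) = ⊥) : fittingSubgroup G = ⊥ := by
  refine le_bot_iff.mp (sSup_le fun N ⟨hN, hNil⟩ => ?_)
  by_contra hN0
  have hMN := le_of_normal_of_centralizer_eq_bot hM hC (N := N) fun h => hN0 h.le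
  have : Group.IsNilpotent M := Group.nilpotent_of_mulEquiv (subgroupOfEquivOfLe hMN)
  exact not_isMulCommutative_of_center_eq_bot
    (center_eq_bot_of_le_of_centralizer_eq_bot le_rfl hC) inferInstance

variable [M.Normal] [IsSimpleGroup M]

theorem le_of_isSubnormal_of_centralizer_eq_bot (hC : centralizer (M : Set G) = ⊥)
    {K : Subgroup G} (hK : IsSubnormal K) : K = ⊥ ∨ M ≤ K := by
  induction hK using Relation.ReflTransGen.head_induction_on with
  | refl => exact Or.inr le_top
  | @head A B hstep _ ih =>
    obtain ⟨hAB, hBA⟩ := hstep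
    rcases ih with hB | hMB
    · exact Or.inl (le_bot_iff.mp (hB ▸ hAB))
    have hMA : M ≤ normalizer (A : Set G) :=
      hMB.trans ((normal_subgroupOf_iff_le_normalizer hAB).mp
        ((normal_subgroupOf_iff hAB).mpr fun a b ha hb => hBA b hb a ha))
    have := normal_subgroupOf_of_le_normalizer hMA
    rcases IsSimpleGroup.eq_bot_or_eq_top_of_normal _ this with h | h
    · left
      rw [← le_bot_iff, ← hC]
      exact le_centralizer_of_disjoint le_normalizer_of_normal hMA (subgroupOf_eq_bot.mp h)
    · exact Or.inr (subgroupOf_eq_top.mp h)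

theorem eq_of_isComponent_of_centralizer_eq_bot (hC : centralizer (M : Set G) = ⊥)
    {L : Subgroup G} (hL : IsComponent L) : L = M := by
  obtain ⟨hLsub, -, hLsimple⟩ := hL
  rcases le_of_isSubnormal_of_centralizer_eq_bot hC hLsub with rfl | hML
  · have : Subsingleton (↥(⊥ : Subgroup G) ⧸ center ↥(⊥ : Subgroup G)) :=
      QuotientGroup.mk_surjective.subsingleton
    exact absurd hLsimple.toNontrivial (not_nontrivial _)
  have := (isSimpleGroup_quotient_center_iff
    (center_eq_bot_of_le_of_centralizer_eq_bot hML hC)).mp hLsimple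
  rcases IsSimpleGroup.eq_bot_or_eq_top_of_normal (M.subgroupOf L) inferInstance with h | h
  · exact absurd (disjoint_of_le_iff_left_eq_bot hML |>.mp (subgroupOf_eq_bot.mp h))
      ((nontrivial_iff_ne_bot M).mp inferInstance)
  · exact le_antisymm (subgroupOf_eq_top.mp h) hML

theorem isComponent_of_centralizer_eq_bot (hC : centralizer (M : Set G) = ⊥) :
    IsComponent M := by
  have hZ := center_eq_bot_of_le_of_centralizer_eq_bot le_rfl hC
  refine ⟨.single ⟨le_top, fun b _ a ha => ‹M.Normal›.conj_mem a ha b⟩, ?_,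
    (isSimpleGroup_quotient_center_iff hZ).mpr inferInstance⟩
  exact (IsSimpleGroup.eq_bot_or_eq_top_of_normal _ inferInstance).resolve_left fun h =>
    not_isMulCommutative_of_center_eq_bot hZ ((commutator_eq_bot_iff _).mp h)

theorem layerSub_eq_of_centralizer_eq_bot (hC : centralizer (M : Set G) = ⊥) :
    layerSub G = M :=
  le_antisymm (sSup_le fun _ hL => (eq_of_isComponent_of_centralizer_eq_bot hC hL).le)
    (le_sSup (isComponent_of_centralizer_eq_bot hC))

end TrivialCentralizer

theorem genFitting_simple_of_strongly_p_embedded {G : Type*} [Group G] [Finite G]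
    (p : ℕ) (hp : p.Prime) (H : Subgroup G) (hH : IsStronglyPEmbedded p H)
    (hcore : pPrimeCore p G = ⊥) :
    fittingSubgroup G = ⊥ ∧ genFitting G = layerSub G ∧
      IsSimpleGroup ↥(layerSub G) ∧ ∃ a b : ↥(layerSub G), a * b ≠ b * a := by
  have : Fact p.Prime := ⟨hp⟩
  have hG : (⊤ : Subgroup G) ≠ ⊥ := fun h => hH.1 (eq_top_iff.mpr (h ▸ bot_le))
  obtain ⟨M, hM⟩ := exists_minimal_of_wellFoundedLT
    (fun N : Subgroup G => N.Normal ∧ N ≠ ⊥) ⟨⊤, inferInstance, hG⟩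
  have := hM.1.1
  have hpM := dvd_card_of_pPrimeCore_eq_bot hcore hM.1.1 hM.1.2
  have hC := hH.centralizer_eq_bot hpM fun _ => dvd_card_of_pPrimeCore_eq_bot hcore
  have := hH.isSimpleGroup_of_minimal hM hpM
  have hF := fittingSubgroup_eq_bot_of_centralizer_eq_bot hM hC
  rw [genFitting, hF, bot_sup_eq, layerSub_eq_of_centralizer_eq_bot hC]
  refine ⟨rfl, rfl, inferInstance, ?_⟩
  by_contra! hcomm
  exact not_isMulCommutative_of_center_eq_bot
    (center_eq_bot_of_le_of_centralizer_eq_bot le_rfl hC) ⟨⟨hcomm⟩⟩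
end

section
/- Let $G$ be a finite group with $G = O^2(G)$, let $t \in G$ be an involution, and let $S \in \mathrm{Syl}_2(C_G(t))$. Assume $S = \langle y \rangle \times S_0$ with $t \in \langle y \rangle$ and $Z(S_0)$ elementary abelian. Then $\langle t \rangle = \langle y \rangle$, i.e., $y$ has order 2 and $y = t$. -/
/-!
If `y ≠ t`, then `y` has order `2N` with `N` even and `t = y ^ N`. As `Z(S₀)` has exponent 2,
squares of central elements of `S = ⟨y⟩ × S₀` lie in `⟨y²⟩`, whose only involution is `t`; so
`N_G(S) ≤ C_G(t)`; as 2-groups grow in normalisers, `S` is then a Sylow 2-subgroup of `G`.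
Let `M = ⟨y²⟩ × S₀`, of index 2 in `S`: elements `x ∈ S` with `x ^ N = 1` lie in `M`, those
with `x ^ N = t` do not. Evaluate the transfer `G → S/M ≅ ℤ/2` at `y`. A `⟨y⟩`-orbit on `G/S`
of even length `k` contributes a conjugate of `y ^ k`, whose `N`-th power is 1, so it lies in
`M`. The fixed cosets `gS` with `g⁻¹yg ∈ M` form an `S`-set without `S`-fixed points (such a
`g` would normalise `S`, hence centralise `t`), so there are evenly many of them, while the
number of all fixed cosets is odd like `|G : S|`. So the transfer maps `y` to the generator of
`ℤ/2`, contradicting `G = O²(G)`.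
-/

/-- `O^2(G)`: in a finite group, the subgroup generated by the elements of odd order. -/
def twoResidual (G : Type*) [Group G] : Subgroup G :=
  Subgroup.closure {x : G | Odd (orderOf x)}

/-- `S` is a Sylow `p`-subgroup of the subgroup `K` (a maximal `p`-subgroup of `K`). -/
def IsSylowIn {G : Type*} [Group G] (p : ℕ) (S K : Subgroup G) : Prop :=
  S ≤ K ∧ IsPGroup p S ∧ ∀ Q : Subgroup G, Q ≤ K → IsPGroup p Q → S ≤ Q → Q = S

open Subgroup MulAction

namespace Subgroup

variable {H : Type*} [Group H] (N : Subgroup H) (hN : N.index = 2)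

open scoped Classical in
noncomputable def indexTwoChar : H →* Multiplicative (ZMod 2) where
  toFun h := Multiplicative.ofAdd (if h ∈ N then 0 else 1)
  map_one' := by simp
  map_mul' a b := by
    simp only [mul_mem_iff_of_index_two hN]
    by_cases ha : a ∈ N <;> by_cases hb : b ∈ N <;> simp [ha, hb]
    decide

open scoped Classical in
lemma indexTwoChar_apply (h : H) :
    N.indexTwoChar hN h = Multiplicative.ofAdd (if h ∈ N then 0 else 1) := rfl

end Subgroup

section

variable {G : Type*} [Group G]

lemma sum_orbitRel_out_eq_sum {H α β : Type*} [Group H] [MulAction H α] [Fintype α]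
    [Fintype (orbitRel.Quotient H α)] [AddCommMonoid β] (f : α → β)
    (hf : ∀ x ∉ fixedPoints H α, f x = 0) :
    ∑ q : orbitRel.Quotient H α, f q.out = ∑ x, f x := by
  refine Finset.sum_of_injOn Quotient.out Quotient.out_injective.injOn
    (fun _ _ => Finset.mem_coe.mpr (Finset.mem_univ _)) (fun x _ hx => hf x fun hfix => hx ?_)
    (fun _ _ => rfl)
  refine ⟨⟦x⟧, Finset.mem_coe.mpr (Finset.mem_univ _), ?_⟩
  exact mem_fixedPoints'.mp hfix _ (orbitRel_apply.mp (Quotient.mk_out x))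

lemma mem_fixedPoints_zpowers_iff {H α : Type*} [Group H] [MulAction H α] {g : H} {x : α} :
    x ∈ fixedPoints (zpowers g) α ↔ g • x = x :=
  ⟨fun h => h ⟨g, mem_zpowers g⟩,
    fun h c => zpowers_le.mpr (mem_stabilizer_iff.mpr h) c.2⟩

lemma twoResidual_le_ker {A : Type*} [Group A] (f : G →* A) (hA : ∀ a : A, a ^ 2 = 1) :
    twoResidual G ≤ f.ker := by
  refine (closure_le _).mpr fun x hx => ?_
  have hcop : (orderOf x).Coprime 2 := hx.coprime_two_right
  exact orderOf_eq_one_iff.mp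
    (Nat.eq_one_of_dvd_coprimes hcop (orderOf_map_dvd f x) (orderOf_dvd_of_pow_eq_one (hA _)))

lemma IsSylowIn.not_dvd_index [Finite G] {p : ℕ} [Fact p.Prime] {S K : Subgroup G}
    (hS : IsSylowIn p S K) (hN : normalizer (S : Set G) ≤ K) : ¬ p ∣ S.index := by
  obtain ⟨-, hSp, hSmax⟩ := hS
  obtain ⟨P, hSP⟩ := hSp.exists_le_sylow
  have hNP : normalizer (S : Set G) ⊓ P = S :=
    hSmax _ (inf_le_left.trans hN) (P.isPGroup'.to_le inf_le_right) (le_inf le_normalizer hSP)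
  have : Group.IsNilpotent P := P.isPGroup'.isNilpotent
  have hself : normalizer (S.subgroupOf P : Set P) = S.subgroupOf P := by
    refine le_antisymm (fun x hx => ?_) le_normalizer
    rw [← subgroupOf_normalizer_eq hSP, mem_subgroupOf] at hx
    exact mem_subgroupOf.mpr (hNP ▸ mem_inf.mpr ⟨hx, x.2⟩)
  have htop := normalizerCondition_iff_only_full_group_self_normalizing.mp
    Group.normalizerCondition_of_isNilpotent _ hself
  rw [← le_antisymm (subgroupOf_eq_top.mp htop) hSP]
  exact P.not_dvd_index

section Transfer

variable {S M : Subgroup G} {y : G}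

lemma conj_mem_iff_smul_eq (g : G) : g⁻¹ * y * g ∈ S ↔ y • (g : G ⧸ S) = g := by
  rw [mul_assoc, ← QuotientGroup.eq, eq_comm]
  rfl

lemma conj_out_mem_iff (hSM : S ≤ normalizer (M : Set G)) (g : G) :
    (g : G ⧸ S).out⁻¹ * y * (g : G ⧸ S).out ∈ M ↔ g⁻¹ * y * g ∈ M := by
  obtain ⟨s, hs⟩ := QuotientGroup.mk_out_eq_mul S g
  rw [hs, mul_inv_rev, show (↑s)⁻¹ * g⁻¹ * y * (g * s) = (↑s)⁻¹ * (g⁻¹ * y * g) * s by group]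
  exact (mem_normalizer_iff''.mp (hSM s.2) _).symm

lemma conj_pow_minimalPeriod_mem (hSp : IsPGroup 2 S) (hy : y ∈ S)
    (hpow : ∀ (g : G) (k : ℕ), Even k → g⁻¹ * y ^ k * g ∈ S → g⁻¹ * y ^ k * g ∈ M)
    {x : G ⧸ S} (hx : y • x ≠ x) :
    x.out⁻¹ * y ^ Function.minimalPeriod (y • ·) x * x.out ∈ M := by
  refine hpow _ _ ?_ (QuotientGroup.out_conj_pow_minimalPeriod_mem S y x)
  obtain ⟨k, hk⟩ := IsPGroup.iff_orderOf.mp hSp ⟨y, hy⟩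
  have hdvd : Function.minimalPeriod (y • ·) x ∣ 2 ^ k := by
    rw [← pow_smul_eq_iff_minimalPeriod_dvd, ← hk, orderOf_mk, pow_orderOf_eq_one, one_smul]
  obtain ⟨_ | j, -, hj⟩ := (Nat.dvd_prime_pow Nat.prime_two).mp hdvd
  · rw [pow_zero, Function.minimalPeriod_eq_one_iff_isFixedPt] at hj
    exact absurd hj hx
  · exact hj ▸ (Nat.even_pow.mpr ⟨even_two, j.succ_ne_zero⟩)

variable [Finite G]

lemma toAdd_transfer_indexTwoChar (hSp : IsPGroup 2 S) (hy : y ∈ S)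
    (hM : (M.subgroupOf S).index = 2)
    (hpow : ∀ (g : G) (k : ℕ), Even k → g⁻¹ * y ^ k * g ∈ S → g⁻¹ * y ^ k * g ∈ M) :
    (MonoidHom.transfer ((M.subgroupOf S).indexTwoChar hM) y).toAdd =
      ({x : G ⧸ S | y • x = x ∧ x.out⁻¹ * y * x.out ∉ M}.ncard : ZMod 2) := by
  classical
  let : Fintype (G ⧸ S) := Fintype.ofFinite _
  set A := {x : G ⧸ S | y • x = x ∧ x.out⁻¹ * y * x.out ∉ M}
  have hcontrib (x : G ⧸ S) :
      (if x.out⁻¹ * y ^ Function.minimalPeriod (y • ·) x * x.out ∈ M then 0 else 1 : ZMod 2) =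
        if x ∈ A then 1 else 0 := by
    by_cases hx : y • x = x
    · rw [Function.minimalPeriod_eq_one_iff_isFixedPt.mpr hx, pow_one]
      simp [A, hx]
    · simp [A, hx, conj_pow_minimalPeriod_mem hSp hy hpow hx]
  rw [MonoidHom.transfer_eq_prod_quotient_orbitRel_zpowers_quot, toAdd_prod]
  simp only [Subgroup.indexTwoChar_apply, mem_subgroupOf, toAdd_ofAdd, hcontrib]
  refine (sum_orbitRel_out_eq_sum (fun x => if x ∈ A then (1 : ZMod 2) else 0)
    fun x hx => if_neg fun hA => hx (mem_fixedPoints_zpowers_iff.mpr hA.1)).trans ?_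
  rw [Finset.sum_boole, Set.ncard_eq_toFinset_card']
  congr 2
  ext
  simp

lemma odd_ncard_fixed (hSp : IsPGroup 2 S) (hodd : ¬ 2 ∣ S.index) (hy : y ∈ S) :
    Odd {x : G ⧸ S | y • x = x}.ncard := by
  have h := (hSp.to_le (zpowers_le.mpr hy)).card_modEq_card_fixedPoints (G ⧸ S)
  have hfix : fixedPoints (zpowers y) (G ⧸ S) = {x : G ⧸ S | y • x = x} :=
    Set.ext fun _ => mem_fixedPoints_zpowers_iff
  rw [hfix, Nat.card_coe_set_eq, ← index_eq_card] at h
  rw [Nat.odd_iff, ← Nat.two_dvd_ne_zero.mp hodd]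
  exact h.symm

lemma even_ncard_conj_mem (hSp : IsPGroup 2 S) (hSM : S ≤ normalizer (M : Set G))
    (hyc : ∀ s ∈ S, Commute y s) (hnorm : ∀ n ∈ normalizer (S : Set G), n⁻¹ * y * n ∉ M) :
    Even {x : G ⧸ S | x.out⁻¹ * y * x.out ∈ M}.ncard := by
  let V : SubMulAction S (G ⧸ S) :=
    { carrier := {x | x.out⁻¹ * y * x.out ∈ M}
      smul_mem' := fun c x hx => by
        have hcx : c • x = ((c * x.out : G) : G ⧸ S) := by
          conv_lhs => rw [← QuotientGroup.out_eq' x]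
          rfl
        have hcy : (c : G)⁻¹ * y * c = y := by
          rw [mul_assoc, (hyc c c.2).eq, inv_mul_cancel_left]
        rw [Set.mem_ofPred_eq, hcx, conj_out_mem_iff hSM, mul_inv_rev,
          show x.out⁻¹ * (↑c)⁻¹ * y * (↑c * x.out) = x.out⁻¹ * ((↑c)⁻¹ * y * c) * x.out by group,
          hcy]
        exact hx }
  have hempty : IsEmpty (fixedPoints S V) := by
    refine ⟨fun ⟨⟨x, hx⟩, hfix⟩ => hnorm x.out ?_ hx⟩
    rw [← Sylow.mem_fixedPoints_mul_left_cosets_iff_mem_normalizer, QuotientGroup.out_eq']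
    exact fun c => congrArg Subtype.val (hfix c)
  have h := hSp.card_modEq_card_fixedPoints V
  rw [@Nat.card_of_isEmpty _ hempty] at h
  exact even_iff_two_dvd.mpr (Nat.modEq_zero_iff_dvd.mp h)

lemma odd_ncard_fixed_conj_not_mem (hSp : IsPGroup 2 S) (hodd : ¬ 2 ∣ S.index) (hy : y ∈ S)
    (hyc : ∀ s ∈ S, Commute y s) (hMS : M ≤ S) (hSM : S ≤ normalizer (M : Set G))
    (hnorm : ∀ n ∈ normalizer (S : Set G), n⁻¹ * y * n ∉ M) :
    Odd {x : G ⧸ S | y • x = x ∧ x.out⁻¹ * y * x.out ∉ M}.ncard := by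
  set F := {x : G ⧸ S | y • x = x}
  set V := {x : G ⧸ S | x.out⁻¹ * y * x.out ∈ M}
  have hVF : V ⊆ F := fun x hx => by
    rw [← QuotientGroup.out_eq' x]
    exact (conj_mem_iff_smul_eq x.out).mp (hMS hx)
  have hsplit := Set.ncard_inter_add_ncard_sdiff_eq_ncard F V
  rw [Set.inter_eq_right.mpr hVF] at hsplit
  have hF := odd_ncard_fixed hSp hodd hy
  have hV := even_ncard_conj_mem hSp hSM hyc hnorm
  change Odd (F \ V).ncard
  rw [← hsplit] at hF
  exact (Nat.odd_add'.mp hF).mpr hV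

theorem transfer_indexTwoChar_eq (hSp : IsPGroup 2 S) (hodd : ¬ 2 ∣ S.index) (hy : y ∈ S)
    (hyc : ∀ s ∈ S, Commute y s) (hMS : M ≤ S) (hM : (M.subgroupOf S).index = 2)
    (hpow : ∀ (g : G) (k : ℕ), Even k → g⁻¹ * y ^ k * g ∈ S → g⁻¹ * y ^ k * g ∈ M)
    (hnorm : ∀ n ∈ normalizer (S : Set G), n⁻¹ * y * n ∉ M) :
    MonoidHom.transfer ((M.subgroupOf S).indexTwoChar hM) y = Multiplicative.ofAdd 1 := by
  have : (M.subgroupOf S).Normal := normal_of_index_eq_two hM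
  have hSM : S ≤ normalizer (M : Set G) := le_normalizer_of_normal_subgroupOf hMS
  refine Multiplicative.toAdd.injective ?_
  rw [toAdd_transfer_indexTwoChar hSp hy hM hpow, toAdd_ofAdd, ZMod.natCast_eq_one_iff_odd]
  exact odd_ncard_fixed_conj_not_mem hSp hodd hy hyc hMS hSM hnorm

theorem twoResidual_ne_top (hSp : IsPGroup 2 S) (hodd : ¬ 2 ∣ S.index) (hy : y ∈ S)
    (hyc : ∀ s ∈ S, Commute y s) (hMS : M ≤ S) (hM : (M.subgroupOf S).index = 2)
    (hpow : ∀ (g : G) (k : ℕ), Even k → g⁻¹ * y ^ k * g ∈ S → g⁻¹ * y ^ k * g ∈ M)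
    (hnorm : ∀ n ∈ normalizer (S : Set G), n⁻¹ * y * n ∉ M) :
    twoResidual G ≠ ⊤ := fun hG => by
  have h := twoResidual_le_ker (MonoidHom.transfer ((M.subgroupOf S).indexTwoChar hM))
    (by decide) (hG ▸ mem_top y)
  rw [MonoidHom.mem_ker, transfer_indexTwoChar_eq hSp hodd hy hyc hMS hM hpow hnorm] at h
  exact absurd h (by decide)

end Transfer

lemma inv_mul_mul_pow (n b : G) (k : ℕ) : (n⁻¹ * b * n) ^ k = n⁻¹ * b ^ k * n := by
  simpa using conj_pow (a := n⁻¹) (b := b) (i := k)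

lemma eq_pow_of_mem_zpowers {y u : G} {N : ℕ} (hord : orderOf y = 2 * N) (hu : u ∈ zpowers y)
    (hu1 : u ≠ 1) (hu2 : u ^ 2 = 1) : u = y ^ N := by
  obtain ⟨a, rfl⟩ := mem_zpowers_iff.mp hu
  have h2a : ((2 * N : ℕ) : ℤ) ∣ 2 * a := by
    rw [← hord, orderOf_dvd_iff_zpow_eq_one, mul_comm, zpow_mul, zpow_two, ← sq, hu2]
  obtain ⟨c, rfl⟩ : (N : ℤ) ∣ a := by
    push_cast at h2a
    exact (mul_dvd_mul_iff_left two_ne_zero).mp h2a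
  obtain ⟨d, rfl⟩ : Odd c := by
    refine Int.not_even_iff_odd.mp fun ⟨d, hd⟩ => hu1 (orderOf_dvd_iff_zpow_eq_one.mp ?_)
    exact ⟨d, by rw [hord, hd]; push_cast; ring⟩
  rw [← zpow_natCast, zpow_eq_zpow_iff_modEq, hord, Int.modEq_iff_dvd]
  exact ⟨-d, by push_cast; ring⟩

section DirectFactor

variable {y : G} {S₀ : Subgroup G} {N : ℕ}

lemma zpow_eq_zpow_of_zpow_mul_eq (hinf : zpowers y ⊓ S₀ = ⊥) {a b : ℤ} {s s' : G}
    (hs : s ∈ S₀) (hs' : s' ∈ S₀) (h : y ^ a * s = y ^ b * s') : y ^ a = y ^ b := by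
  have hmem : (y ^ b)⁻¹ * y ^ a ∈ zpowers y ⊓ S₀ := by
    refine mem_inf.mpr
      ⟨mul_mem (inv_mem (zpow_mem (mem_zpowers y) b)) (zpow_mem (mem_zpowers y) a), ?_⟩
    rw [eq_mul_inv_of_mul_eq h, ← mul_assoc, ← mul_assoc, inv_mul_cancel, one_mul]
    exact mul_mem hs' (inv_mem hs)
  rw [hinf, mem_bot, inv_mul_eq_one] at hmem
  exact hmem.symm

lemma two_dvd_sub_of_zpow_mul_eq (hord : orderOf y = 2 * N) (hN : N ≠ 0) {a b : ℤ}
    (h : y ^ (a * N) = y ^ (b * N)) : 2 ∣ a - b := by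
  rw [zpow_eq_zpow_iff_modEq, hord, Int.modEq_iff_dvd, ← sub_mul] at h
  push_cast at h
  have := (mul_dvd_mul_iff_right (by exact_mod_cast hN : (N : ℤ) ≠ 0)).mp h
  omega

variable (hcomm : ∀ s ∈ S₀, Commute y s)
include hcomm

lemma commute_of_mem_zpowers_sup {x : G} (hx : x ∈ zpowers y ⊔ S₀) : Commute y x := by
  have hle : zpowers y ⊔ S₀ ≤ centralizer {y} :=
    sup_le (zpowers_le.mpr (mem_centralizer_singleton_iff.mpr rfl))
      fun s hs => mem_centralizer_singleton_iff.mpr (hcomm s hs).eq.symm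
  exact (mem_centralizer_singleton_iff.mp (hle hx)).symm

lemma exists_zpow_mul_eq {x : G} (hx : x ∈ zpowers y ⊔ S₀) :
    ∃ a : ℤ, ∃ s ∈ S₀, y ^ a * s = x := by
  have hle : zpowers y ≤ normalizer (S₀ : Set G) := zpowers_le.mpr <|
    centralizer_le_normalizer _ (mem_centralizer_iff.mpr fun s hs => (hcomm s hs).eq.symm)
  rw [← SetLike.mem_coe, coe_mul_of_left_le_normalizer_right _ _ hle] at hx
  obtain ⟨_, hz, s, hs, rfl⟩ := hx
  obtain ⟨a, rfl⟩ := mem_zpowers_iff.mp hz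
  exact ⟨a, s, hs, rfl⟩

lemma zpow_mul_pow {s : G} (hs : s ∈ S₀) (a : ℤ) (n : ℕ) :
    (y ^ a * s) ^ n = y ^ (a * n) * s ^ n := by
  rw [((hcomm s hs).zpow_left a).mul_pow, ← zpow_natCast, ← zpow_mul]

lemma mem_sq_sup_iff (hinf : zpowers y ⊓ S₀ = ⊥) (hy2 : 2 ∣ orderOf y) {a : ℤ} {s : G}
    (hs : s ∈ S₀) : y ^ a * s ∈ zpowers (y ^ 2) ⊔ S₀ ↔ 2 ∣ a := by
  constructor
  · intro h
    obtain ⟨b, s', hs', hb⟩ := exists_zpow_mul_eq (fun s hs => (hcomm s hs).pow_left 2) h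
    rw [← zpow_natCast, ← zpow_mul] at hb
    have h := zpow_eq_zpow_of_zpow_mul_eq hinf hs' hs hb
    rw [zpow_eq_zpow_iff_modEq, Int.modEq_iff_dvd] at h
    have := (Int.natCast_dvd_natCast.mpr hy2).trans h
    push_cast at this
    omega
  · rintro ⟨c, rfl⟩
    refine mul_mem (mem_sup_left (mem_zpowers_iff.mpr ⟨c, ?_⟩)) (mem_sup_right hs)
    rw [← zpow_natCast, ← zpow_mul]
    rfl

lemma index_sq_sup_subgroupOf (hinf : zpowers y ⊓ S₀ = ⊥) (hy2 : 2 ∣ orderOf y) :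
    ((zpowers (y ^ 2) ⊔ S₀).subgroupOf (zpowers y ⊔ S₀)).index = 2 := by
  refine relIndex_eq_two_iff.mpr ⟨y, mem_sup_left (mem_zpowers y), fun b hb => ?_⟩
  obtain ⟨a, s, hs, rfl⟩ := exists_zpow_mul_eq hcomm hb
  rw [mul_assoc, ← (hcomm s hs).eq, ← mul_assoc, ← zpow_add_one,
    mem_sq_sup_iff hcomm hinf hy2 hs, mem_sq_sup_iff hcomm hinf hy2 hs, xor_iff_not_iff]
  omega

lemma mem_sq_sup_of_pow_eq_one (hinf : zpowers y ⊓ S₀ = ⊥) (hord : orderOf y = 2 * N)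
    (hN : N ≠ 0) {x : G} (hx : x ∈ zpowers y ⊔ S₀) (h : x ^ N = 1) :
    x ∈ zpowers (y ^ 2) ⊔ S₀ := by
  obtain ⟨a, s, hs, rfl⟩ := exists_zpow_mul_eq hcomm hx
  have h' : y ^ (a * N) * s ^ N = y ^ ((0 : ℤ) * N) * 1 := by
    rw [← zpow_mul_pow hcomm hs, h, zero_mul, zpow_zero, mul_one]
  have := two_dvd_sub_of_zpow_mul_eq hord hN
    (zpow_eq_zpow_of_zpow_mul_eq hinf (pow_mem hs N) (one_mem _) h')
  rw [mem_sq_sup_iff hcomm hinf (hord ▸ dvd_mul_right 2 N) hs]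
  simpa using this

lemma not_mem_sq_sup_of_pow_eq (hinf : zpowers y ⊓ S₀ = ⊥) (hord : orderOf y = 2 * N)
    (hN : N ≠ 0) {x : G} (hx : x ∈ zpowers y ⊔ S₀) (h : x ^ N = y ^ N) :
    x ∉ zpowers (y ^ 2) ⊔ S₀ := by
  obtain ⟨a, s, hs, rfl⟩ := exists_zpow_mul_eq hcomm hx
  have h' : y ^ (a * N) * s ^ N = y ^ ((1 : ℤ) * N) * 1 := by
    rw [← zpow_mul_pow hcomm hs, h, one_mul, mul_one, zpow_natCast]
  have := two_dvd_sub_of_zpow_mul_eq hord hN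
    (zpow_eq_zpow_of_zpow_mul_eq hinf (pow_mem hs N) (one_mem _) h')
  rw [mem_sq_sup_iff hcomm hinf (hord ▸ dvd_mul_right 2 N) hs]
  omega

lemma normalizer_le_centralizer_pow (hZ : ∀ z ∈ S₀, (∀ w ∈ S₀, Commute z w) → z ^ 2 = 1)
    (hord : orderOf y = 2 * N) (hN : N ≠ 0) (hN2 : 2 ∣ N) :
    normalizer ((zpowers y ⊔ S₀ : Subgroup G) : Set G) ≤ centralizer {y ^ N} := by
  intro n hn
  rw [mem_centralizer_singleton_iff]
  suffices h : n⁻¹ * y ^ N * n = y ^ N by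
    nth_rw 1 [← h]
    group
  obtain ⟨L, rfl⟩ := hN2
  set w := n⁻¹ * y ^ L * n
  have hw : w ∈ zpowers y ⊔ S₀ :=
    (mem_normalizer_iff''.mp hn _).mp (pow_mem (mem_sup_left (mem_zpowers y)) L)
  have hwc : ∀ x ∈ zpowers y ⊔ S₀, Commute w x := fun x hx => by
    have h := (commute_of_mem_zpowers_sup hcomm ((mem_normalizer_iff.mp hn x).mp hx)).pow_left L
    simpa [w, mul_assoc] using (Commute.conj_iff n⁻¹).mpr h
  obtain ⟨a, s, hs, hsw⟩ := exists_zpow_mul_eq hcomm hw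
  have hs2 : s ^ 2 = 1 := hZ s hs fun v hv => by
    rw [eq_inv_mul_of_mul_eq hsw]
    exact ((hcomm v hv).zpow_left a).inv_left.mul_left (hwc v (mem_sup_right hv))
  refine eq_pow_of_mem_zpowers hord ?_ ?_ ?_
  · rw [pow_mul', ← inv_mul_mul_pow]
    change w ^ 2 ∈ _
    rw [← hsw, zpow_mul_pow hcomm hs, hs2, mul_one]
    exact zpow_mem (mem_zpowers y) _
  · rw [mul_assoc, Ne, inv_mul_eq_one, eq_comm, mul_eq_right]
    exact pow_ne_one_of_lt_orderOf hN (by omega)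
  · rw [inv_mul_mul_pow, ← pow_mul, mul_comm, ← hord, pow_orderOf_eq_one, mul_one,
      inv_mul_cancel]

end DirectFactor

end

theorem zpowers_eq_of_direct_factor {G : Type*} [Group G] [Finite G]
    (hG : twoResidual G = ⊤)
    (t : G) (ht : orderOf t = 2)
    (S : Subgroup G) (hS : IsSylowIn 2 S (Subgroup.centralizer {t}))
    (y : G) (S₀ : Subgroup G)
    (hcomm : ∀ s ∈ S₀, Commute y s)
    (hinf : Subgroup.zpowers y ⊓ S₀ = ⊥)
    (hsup : Subgroup.zpowers y ⊔ S₀ = S)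
    (htY : t ∈ Subgroup.zpowers y)
    (hZ : ∀ z ∈ S₀, (∀ w ∈ S₀, Commute z w) → z ^ 2 = 1) :
    Subgroup.zpowers t = Subgroup.zpowers y := by
  subst hsup
  set S := zpowers y ⊔ S₀
  set M := zpowers (y ^ 2) ⊔ S₀
  obtain ⟨ht2, ht1⟩ := orderOf_eq_prime_iff.mp ht
  have hyS : y ∈ S := mem_sup_left (mem_zpowers y)
  have hSp : IsPGroup 2 S := hS.2.1
  suffices hy2 : orderOf y = 2 from eq_of_le_of_card_ge (zpowers_le.mpr htY)
    (by rw [Nat.card_zpowers, Nat.card_zpowers, ht, hy2])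
  by_contra hy2
  obtain ⟨N, hord, hN, hN2⟩ : ∃ N, orderOf y = 2 * N ∧ N ≠ 0 ∧ 2 ∣ N := by
    obtain ⟨_ | _ | j, hk⟩ := IsPGroup.iff_orderOf.mp hSp ⟨y, hyS⟩
    · rw [orderOf_mk, pow_zero, orderOf_eq_one_iff] at hk
      exact absurd (by simpa [hk] using htY) ht1
    · exact (hy2 (by rwa [orderOf_mk] at hk)).elim
    · exact ⟨2 ^ (j + 1), by rw [← orderOf_mk y hyS, hk]; ring, by positivity,
        dvd_pow_self 2 j.succ_ne_zero⟩
  obtain rfl := eq_pow_of_mem_zpowers hord htY ht1 ht2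
  have hnormal := normalizer_le_centralizer_pow hcomm hZ hord hN hN2
  have hpow (g : G) (k : ℕ) (hk : Even k) (hg : g⁻¹ * y ^ k * g ∈ S) : g⁻¹ * y ^ k * g ∈ M := by
    refine mem_sq_sup_of_pow_eq_one hcomm hinf hord hN hg ?_
    obtain ⟨m, rfl⟩ := hk
    rw [inv_mul_mul_pow, ← pow_mul, show (m + m) * N = orderOf y * m by rw [hord]; ring,
      pow_mul, pow_orderOf_eq_one, one_pow, mul_one, inv_mul_cancel]
  have hnorm (n : G) (hn : n ∈ normalizer (S : Set G)) : n⁻¹ * y * n ∉ M := by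
    refine not_mem_sq_sup_of_pow_eq hcomm hinf hord hN ((mem_normalizer_iff''.mp hn y).mp hyS) ?_
    rw [inv_mul_mul_pow, mul_assoc, ← mem_centralizer_singleton_iff.mp (hnormal hn),
      inv_mul_cancel_left]
  exact twoResidual_ne_top hSp (hS.not_dvd_index hnormal) hyS
    (fun x hx => commute_of_mem_zpowers_sup hcomm hx)
    (sup_le_sup_right (zpowers_le.mpr (pow_mem (mem_zpowers y) 2)) S₀)
    (index_sq_sup_subgroupOf hcomm hinf (hord ▸ dvd_mul_right 2 N)) hpow hnorm hG
end
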